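/- For 0 ≤ ν ≤ g, every positive semidefinite half-integral g×g matrix of rank ν can be written as U^t (T' 0; 0 0_{g−ν}) U with U ∈ GL(g,ℤ) and T' a positive definite half-integral ν×ν matrix. -/

import Mathlib

open Matrix

noncomputable section


lemma dot_expand {ι : Type*} [Fintype ι] (T : Matrix ι ι ℚ) (x y : ι → ℚ) :
    x ⬝ᵥ T.mulVec y = ∑ i, ∑ j, x i * T i j * y j := by
  simp [dotProduct, mulVec, Finset.mul_sum, mul_assoc]

lemma dot_symm {g : ℕ} (T : Matrix (Fin g) (Fin g) ℚ) (hT : T.IsSymm)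
    (x y : Fin g → ℚ) : x ⬝ᵥ T.mulVec y = y ⬝ᵥ T.mulVec x := by
  rw [Matrix.dotProduct_mulVec, ← Matrix.mulVec_transpose, dotProduct_comm, hT.eq]

lemma conj_entry {g : ℕ} (A T : Matrix (Fin g) (Fin g) ℚ) (i j : Fin g) :
    (Aᵀ * T * A) i j = (fun k => A k i) ⬝ᵥ T.mulVec (fun k => A k j) := by
  simp only [Matrix.mul_apply, Matrix.transpose_apply, dotProduct, mulVec,
    Finset.sum_mul, Finset.mul_sum]
  rw [Finset.sum_comm]
  apply Finset.sum_congr rfl; intro k _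
  apply Finset.sum_congr rfl; intro l _
  ring

lemma psd_ker {g : ℕ} (T : Matrix (Fin g) (Fin g) ℚ) (hT : T.IsSymm)
    (hpsd : ∀ x : Fin g → ℚ, 0 ≤ x ⬝ᵥ T.mulVec x)
    (y : Fin g → ℚ) (hy : y ⬝ᵥ T.mulVec y = 0) : T.mulVec y = 0 := by
  have key : ∀ z : Fin g → ℚ, z ⬝ᵥ T.mulVec y = 0 := by
    intro z
    set α := z ⬝ᵥ T.mulVec y with hα
    set β := z ⬝ᵥ T.mulVec z with hβdef
    have hβ : 0 ≤ β := hpsd z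
    have expand : ∀ t : ℚ, 0 ≤ t * (2 * α + t * β) := by
      intro t
      have h := hpsd (y + t • z)
      have e : (y + t • z) ⬝ᵥ T.mulVec (y + t • z)
          = y ⬝ᵥ T.mulVec y + t * (2 * α + t * β) := by
        rw [Matrix.mulVec_add, dotProduct_add, add_dotProduct,
          add_dotProduct, Matrix.mulVec_smul, dotProduct_smul,
          smul_dotProduct, smul_dotProduct, dotProduct_smul]
        have h2 : y ⬝ᵥ T.mulVec z = α := by rw [hα, dot_symm T hT]
        rw [h2, ← hα, ← hβdef]
        simp only [smul_eq_mul]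
        ring
      rw [e, hy] at h
      linarith
    by_contra hα0
    have hα2 : 0 < α ^ 2 := by positivity
    have hb1 : (0 : ℚ) < β + 1 := by linarith
    have h := expand (-(α / (β + 1)))
    have e2 : -(α / (β + 1)) * (2 * α + -(α / (β + 1)) * β)
        = -((α ^ 2 * (β + 2)) / (β + 1) ^ 2) := by
      field_simp
      ring
    rw [e2] at h
    have h3 : 0 < (α ^ 2 * (β + 2)) / (β + 1) ^ 2 :=
      div_pos (by nlinarith) (by positivity)
    linarith
  funext k
  have := key (Pi.single k 1)
  simpa [single_dotProduct] using this

lemma dotProduct_finsum {κ : Type*} {g : ℕ} (s : Finset κ) (w : Fin g → ℚ) (f : κ → Fin g → ℚ) :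
    w ⬝ᵥ (∑ k ∈ s, f k) = ∑ k ∈ s, w ⬝ᵥ f k := by
  simp only [dotProduct, Finset.sum_apply, Finset.mul_sum]
  exact Finset.sum_comm

lemma finsum_dotProduct {κ : Type*} {g : ℕ} (s : Finset κ) (w : Fin g → ℚ) (f : κ → Fin g → ℚ) :
    (∑ k ∈ s, f k) ⬝ᵥ w = ∑ k ∈ s, f k ⬝ᵥ w := by
  simp only [dotProduct, Finset.sum_apply, Finset.sum_mul]
  exact Finset.sum_comm

/-- 2 * xᵀ T y is an integer for integral vectors. -/
lemma two_dot_int {g : ℕ} (T : Matrix (Fin g) (Fin g) ℚ)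
    (h2 : ∀ i j, ∃ z : ℤ, 2 * T i j = (z : ℚ)) (x y : Fin g → ℤ) :
    ∃ z : ℤ, 2 * ((fun i => (x i : ℚ)) ⬝ᵥ T.mulVec (fun i => (y i : ℚ))) = (z : ℚ) := by
  choose zc hzc using h2
  refine ⟨∑ i, ∑ j, x i * zc i j * y j, ?_⟩
  rw [dot_expand, Finset.mul_sum]
  push_cast
  apply Finset.sum_congr rfl; intro i _
  rw [Finset.mul_sum]
  apply Finset.sum_congr rfl; intro j _
  rw [← hzc i j]; ring

lemma dot_int {g : ℕ} (T : Matrix (Fin g) (Fin g) ℚ) (hsym : T.IsSymm)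
    (hdiag : ∀ i, ∃ z : ℤ, T i i = (z : ℚ)) (hoff : ∀ i j, ∃ z : ℤ, 2 * T i j = (z : ℚ))
    (x : Fin g → ℤ) :
    ∃ z : ℤ, (fun i => (x i : ℚ)) ⬝ᵥ T.mulVec (fun i => (x i : ℚ)) = (z : ℚ) := by
  classical
  choose d hd using hdiag
  choose zc hzc using hoff
  refine ⟨∑ i, d i * x i * x i +
    ∑ p ∈ Finset.univ.offDiag.filter (fun p : Fin g × Fin g => p.1 < p.2),
      x p.1 * zc p.1 p.2 * x p.2, ?_⟩
  rw [dot_expand, ← Finset.sum_product']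
  rw [show (Finset.univ ×ˢ Finset.univ : Finset (Fin g × Fin g))
      = Finset.univ.diag ∪ Finset.univ.offDiag from (Finset.diag_union_offDiag _).symm,
    Finset.sum_union (Finset.disjoint_diag_offDiag _), Finset.sum_diag]
  have hgt : ∑ p ∈ Finset.univ.offDiag.filter (fun p : Fin g × Fin g => ¬ p.1 < p.2),
      (x p.1 : ℚ) * T p.1 p.2 * x p.2
      = ∑ p ∈ Finset.univ.offDiag.filter (fun p : Fin g × Fin g => p.1 < p.2),
      (x p.1 : ℚ) * T p.1 p.2 * x p.2 := by
    refine Finset.sum_nbij' (fun p => (p.2, p.1)) (fun p => (p.2, p.1)) ?_ ?_ ?_ ?_ ?_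
    · intro p hp
      simp only [Finset.mem_filter, Finset.mem_offDiag] at hp ⊢
      have := hp.1.2.2
      refine ⟨⟨by simp, by simp, (Ne.symm this)⟩, ?_⟩
      omega
    · intro p hp
      simp only [Finset.mem_filter, Finset.mem_offDiag] at hp ⊢
      refine ⟨⟨by simp, by simp, (Ne.symm hp.1.2.2)⟩, by omega⟩
    · intro p _; rfl
    · intro p _; rfl
    · intro p _
      have : T p.1 p.2 = T p.2 p.1 := hsym.apply p.2 p.1
      rw [this]; ring
  rw [← Finset.sum_filter_add_sum_filter_not (Finset.univ.offDiag)
      (fun p : Fin g × Fin g => p.1 < p.2), hgt]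
  push_cast
  rw [← Finset.sum_add_distrib]
  congr 1
  · exact Finset.sum_congr rfl fun i _ => by rw [hd i]; ring
  · refine Finset.sum_congr rfl fun p _ => ?_
    have := hzc p.1 p.2
    have : (zc p.1 p.2 : ℚ) = 2 * T p.1 p.2 := (hzc p.1 p.2).symm
    rw [this]; ring


/-- A half-integral matrix: symmetric rational matrix with integer diagonal entries and entries
in `(1/2)ℤ` off the diagonal. -/
def HalfIntegral {ι : Type*} [Fintype ι] (T : Matrix ι ι ℚ) : Prop :=
  T.IsSymm ∧ (∀ i, ∃ z : ℤ, T i i = (z : ℚ)) ∧ ∀ i j, ∃ z : ℤ, 2 * T i j = (z : ℚ)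

/-- Positive semidefiniteness of a rational quadratic form. -/
def PosSemidefQ {ι : Type*} [Fintype ι] (T : Matrix ι ι ℚ) : Prop :=
  ∀ x : ι → ℚ, 0 ≤ x ⬝ᵥ T.mulVec x

/-- Every positive semidefinite half-integral `g × g` matrix of rank `ν` can be written as
`Uᵗ (T' 0; 0 0) U` with `U ∈ GL(g, ℤ)` and `T'` a positive definite half-integral `ν × ν`
matrix. -/
theorem psd_halfIntegral_rank_normal_form (g ν : ℕ) (hν : ν ≤ g)
    (T : Matrix (Fin g) (Fin g) ℚ)
    (hHI : HalfIntegral T) (hpsd : PosSemidefQ T) (hrk : T.rank = ν) :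
    ∃ U : Matrix (Fin g) (Fin g) ℤ, IsUnit U.det ∧
      ∃ T' : Matrix (Fin ν) (Fin ν) ℚ, HalfIntegral T' ∧
        (∀ x : Fin ν → ℚ, x ≠ 0 → 0 < x ⬝ᵥ T'.mulVec x) ∧
        ∀ i j : Fin g,
          T i j = ((U.map (Int.cast : ℤ → ℚ))ᵀ *
            (Matrix.of fun i' j' : Fin g =>
              if h : (i' : ℕ) < ν ∧ (j' : ℕ) < ν then T' ⟨i', h.1⟩ ⟨j', h.2⟩ else 0) *
            U.map (Int.cast : ℤ → ℚ)) i j := by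
  obtain ⟨hsym, hdiag, hoff⟩ := hHI
  have hpsd : ∀ x : Fin g → ℚ, 0 ≤ x ⬝ᵥ T.mulVec x := hpsd
  classical
  let c : (Fin g → ℤ) →ₗ[ℤ] (Fin g → ℚ) :=
    { toFun := fun x i => (x i : ℚ)
      map_add' := fun a b => funext fun i => by push_cast; simp
      map_smul' := fun z a => funext fun i => by push_cast; simp }
  have hc : ∀ (x : Fin g → ℤ) (i : Fin g), c x i = (x i : ℚ) := fun _ _ => rfl
  have hKq_rank : Module.finrank ℚ (LinearMap.ker T.mulVecLin) = g - ν := by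
    have h1 := LinearMap.finrank_range_add_finrank_ker T.mulVecLin
    have h2 : Module.finrank ℚ (Fin g → ℚ) = g := by simp
    have h3 : T.rank = Module.finrank ℚ (LinearMap.range T.mulVecLin) := rfl
    omega
  set K : Submodule ℤ (Fin g → ℤ) :=
    ((LinearMap.ker T.mulVecLin).restrictScalars ℤ).comap c with hKdef
  have hKmem : ∀ x : Fin g → ℤ, x ∈ K ↔ T.mulVec (c x) = 0 := by
    intro x
    rw [hKdef, Submodule.mem_comap, Submodule.restrictScalars_mem, LinearMap.mem_ker,
      Matrix.mulVecLin_apply]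
  obtain ⟨n, ⟨bM, bN, f, a, hsnf⟩⟩ := K.smithNormalForm (Pi.basisFun ℤ (Fin g))
  have ha : ∀ k, a k ≠ 0 := by
    intro k hk
    apply bN.ne_zero k
    have h := hsnf k
    rw [hk, zero_smul] at h
    exact Subtype.ext h
  set Wb : Fin g → (Fin g → ℚ) := fun i => c (bM i) with hWbdef
  have hcsmul : ∀ (z : ℤ) (x : Fin g → ℤ), c (z • x) = (z : ℚ) • c x := by
    intro z x; funext i; rw [hc]; push_cast; simp [hc]
  have hWbker : ∀ k : Fin n, T.mulVec (Wb (f k)) = 0 := by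
    intro k
    have hmem : ((bN k : Fin g → ℤ)) ∈ K := (bN k).2
    rw [hKmem, hsnf k, hcsmul, Matrix.mulVec_smul, smul_eq_zero] at hmem
    rcases hmem with h | h
    · exact absurd (by exact_mod_cast h) (ha k)
    · exact h
  -- linear independence of the casted basis
  have hdetM : IsUnit ((Pi.basisFun ℤ (Fin g)).toMatrix bM).det := by
    apply IsUnit.of_mul_eq_one (bM.toMatrix (Pi.basisFun ℤ (Fin g))).det
    rw [← Matrix.det_mul, Module.Basis.toMatrix_mul_toMatrix_flip, Matrix.det_one]
  have hBunit : IsUnit (((Pi.basisFun ℤ (Fin g)).toMatrix bM).map (Int.cast : ℤ → ℚ)) := by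
    rw [Matrix.isUnit_iff_isUnit_det]
    have h := RingHom.map_det (Int.castRingHom ℚ) ((Pi.basisFun ℤ (Fin g)).toMatrix bM)
    rw [RingHom.mapMatrix_apply] at h
    rw [show ((Pi.basisFun ℤ (Fin g)).toMatrix bM).map (Int.cast : ℤ → ℚ)
        = ((Pi.basisFun ℤ (Fin g)).toMatrix bM).map (Int.castRingHom ℚ) from rfl, ← h]
    exact hdetM.map (Int.castRingHom ℚ)
  have hWbindep : LinearIndependent ℚ Wb := by
    have h := Matrix.linearIndependent_cols_iff_isUnit.mpr hBunit
    have he : (fun j => ((((Pi.basisFun ℤ (Fin g)).toMatrix bM).map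
        (Int.cast : ℤ → ℚ))ᵀ) j) = Wb := by
      funext j; funext i
      rw [Matrix.transpose_apply, Matrix.map_apply, Module.Basis.toMatrix_apply, Pi.basisFun_repr]
      rfl
    rw [← he]; exact h
  -- the rational kernel is spanned by the casted Smith basis vectors
  have hKle : K ≤ Submodule.comap c
      ((Submodule.span ℚ (Set.range fun k => Wb (f k))).restrictScalars ℤ) := by
    have hKspan : K = Submodule.span ℤ (Set.range fun k => ((bN k : Fin g → ℤ))) := by
      conv_lhs => rw [← Submodule.map_subtype_top K]
      rw [← bN.span_eq, Submodule.map_span, ← Set.range_comp]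
      rfl
    rw [hKspan, Submodule.span_le]
    rintro _ ⟨k, rfl⟩
    simp only [SetLike.mem_coe, Submodule.mem_comap, Submodule.restrictScalars_mem]
    rw [hsnf k, hcsmul]
    exact Submodule.smul_mem _ _ (Submodule.subset_span ⟨k, rfl⟩)
  have hKqle : (LinearMap.ker T.mulVecLin : Submodule ℚ (Fin g → ℚ)) ≤
      Submodule.span ℚ (Set.range fun k => Wb (f k)) := by
    intro q hq
    obtain ⟨b, hb⟩ := IsLocalization.exist_integer_multiples_of_finite
      (nonZeroDivisors ℤ) q
    choose x hx using hb
    have hbne : ((b : ℤ) : ℚ) ≠ 0 := by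
      have h0 : (b : ℤ) ≠ 0 := nonZeroDivisors.coe_ne_zero b
      exact_mod_cast h0
    have hcx : c x = ((b : ℤ) : ℚ) • q := by
      funext i
      rw [hc]
      have := hx i
      rw [show (algebraMap ℤ ℚ) (x i) = ((x i : ℤ) : ℚ) from rfl] at this
      rw [this]
      simp [zsmul_eq_mul]
    have hxK : x ∈ K := by
      rw [hKmem, hcx, Matrix.mulVec_smul]
      rw [LinearMap.mem_ker] at hq
      rw [show T.mulVec q = 0 from hq, smul_zero]
    have hmem := hKle hxK
    simp only [Submodule.mem_comap, Submodule.restrictScalars_mem] at hmem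
    have h2 : q = (((b : ℤ) : ℚ))⁻¹ • (c x) := by
      rw [hcx, smul_smul, inv_mul_cancel₀ hbne, one_smul]
    rw [h2]
    exact Submodule.smul_mem _ _ hmem
  -- counting : n = g - ν
  have hWbf_indep : LinearIndependent ℚ (fun k => Wb (f k)) := hWbindep.comp f f.injective
  have hn : n = g - ν := by
    have hmemker : ∀ k, Wb (f k) ∈ LinearMap.ker T.mulVecLin := fun k => by
      rw [LinearMap.mem_ker, Matrix.mulVecLin_apply]; exact hWbker k
    have hle1 : n ≤ g - ν := by
      let u : Fin n → LinearMap.ker T.mulVecLin := fun k => ⟨Wb (f k), hmemker k⟩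
      have hu : LinearIndependent ℚ u :=
        LinearIndependent.of_comp (LinearMap.ker T.mulVecLin).subtype hWbf_indep
      have := hu.fintype_card_le_finrank
      rwa [hKq_rank, Fintype.card_fin] at this
    have hle2 : g - ν ≤ n := by
      have h1 : Module.finrank ℚ (LinearMap.ker T.mulVecLin) ≤
          Module.finrank ℚ (Submodule.span ℚ (Set.range fun k => Wb (f k))) :=
        Submodule.finrank_mono hKqle
      have h2 : Module.finrank ℚ (Submodule.span ℚ (Set.range fun k => Wb (f k))) ≤ n := by
        have h3 := finrank_span_le_card (R := ℚ) (Set.range fun k => Wb (f k))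
        have h4 : (Set.range fun k => Wb (f k)).toFinset.card ≤ n := by
          rw [Set.toFinset_range]
          exact (Finset.card_image_le).trans (by simp)
        omega
      omega
    omega
  -- construction of the permutation
  set s : Finset (Fin g) := Finset.univ.image f with hsdef
  have hscard : s.card = n := by
    rw [hsdef, Finset.card_image_of_injective _ f.injective, Finset.card_univ,
      Fintype.card_fin]
  have hsccard : sᶜ.card = ν := by
    rw [Finset.card_compl, hscard, Fintype.card_fin]; omega
  have hscard' : s.card = g - ν := by rw [hscard, hn]
  let e1 : Fin ν ≃ ↥(sᶜ) := (Finset.equivFinOfCardEq hsccard).symm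
  let e2 : Fin (g - ν) ≃ ↥s := (Finset.equivFinOfCardEq hscard').symm
  let σfun : Fin g → Fin g := fun i =>
    if h : (i : ℕ) < ν then ((e1 ⟨(i : ℕ), h⟩ : ↥(sᶜ)) : Fin g)
    else ((e2 ⟨(i : ℕ) - ν, by have := i.isLt; omega⟩ : ↥s) : Fin g)
  have hσs : ∀ i : Fin g, ¬ (i : ℕ) < ν → σfun i ∈ s := by
    intro i h; simp only [σfun, dif_neg h]; exact Finset.coe_mem _
  have hσsc : ∀ i : Fin g, (i : ℕ) < ν → σfun i ∈ sᶜ := by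
    intro i h; simp only [σfun, dif_pos h]; exact Finset.coe_mem _
  have hσinj : Function.Injective σfun := by
    intro i j hij
    by_cases hi : (i : ℕ) < ν <;> by_cases hj : (j : ℕ) < ν
    · simp only [σfun, dif_pos hi, dif_pos hj] at hij
      have h2 := e1.injective (Subtype.ext hij)
      simp only [Fin.mk.injEq] at h2
      exact Fin.ext h2
    · exfalso
      have h1 := hσsc i hi
      have h2 := hσs j hj
      rw [hij, Finset.mem_compl] at h1
      exact h1 h2
    · exfalso
      have h1 := hσsc j hj
      have h2 := hσs i hi
      rw [← hij, Finset.mem_compl] at h1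
      exact h1 h2
    · simp only [σfun, dif_neg hi, dif_neg hj] at hij
      have h2 := e2.injective (Subtype.ext hij)
      simp only [Fin.mk.injEq] at h2
      have := i.isLt; have := j.isLt
      exact Fin.ext (by omega)
  have hσbij : Function.Bijective σfun := Finite.injective_iff_bijective.mp hσinj
  -- the new basis and associated matrices
  let v : Module.Basis (Fin g) ℤ (Fin g → ℤ) := bM.reindex (Equiv.ofBijective σfun hσbij).symm
  have hv : ∀ i, v i = bM (σfun i) := fun i => by
    rw [Module.Basis.reindex_apply, Equiv.symm_symm]; rfl
  let W : Fin g → (Fin g → ℚ) := fun i => c (v i)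
  have hWWb : ∀ i, W i = Wb (σfun i) := fun i => by
    show c (v i) = c (bM (σfun i)); rw [hv]
  have hWindep : LinearIndependent ℚ W := by
    have he : W = Wb ∘ σfun := funext fun i => hWWb i
    rw [he]; exact hWbindep.comp σfun hσinj
  have hWker : ∀ j : Fin g, ¬ (j : ℕ) < ν → T.mulVec (W j) = 0 := by
    intro j h
    obtain ⟨k, -, hk⟩ := Finset.mem_image.mp (by rw [← hsdef]; exact hσs j h)
    rw [hWWb, ← hk]
    exact hWbker k
  have hkerspan : (LinearMap.ker T.mulVecLin : Submodule ℚ (Fin g → ℚ)) ≤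
      Submodule.span ℚ (W '' {j : Fin g | ¬ (j : ℕ) < ν}) := by
    refine hKqle.trans (Submodule.span_mono ?_)
    rintro _ ⟨k, rfl⟩
    have hfk : f k ∈ s := by rw [hsdef]; exact Finset.mem_image_of_mem f (Finset.mem_univ k)
    obtain ⟨j, hj⟩ := hσbij.2 (f k)
    have hjν : ¬ (j : ℕ) < ν := by
      intro hlt
      have h1 := hσsc j hlt
      rw [Finset.mem_compl, hj] at h1
      exact h1 hfk
    exact ⟨j, hjν, by rw [hWWb, hj]⟩
  let Mz : Matrix (Fin g) (Fin g) ℤ := (Pi.basisFun ℤ (Fin g)).toMatrix v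
  have hMz : ∀ i j, Mz i j = v j i := fun i j => by
    show (Pi.basisFun ℤ (Fin g)).toMatrix v i j = _
    rw [Module.Basis.toMatrix_apply, Pi.basisFun_repr]
  have hdetMz : IsUnit Mz.det := by
    apply IsUnit.of_mul_eq_one (v.toMatrix (Pi.basisFun ℤ (Fin g))).det
    rw [← Matrix.det_mul, Module.Basis.toMatrix_mul_toMatrix_flip, Matrix.det_one]
  let U : Matrix (Fin g) (Fin g) ℤ := Mz⁻¹
  have hUdet : IsUnit U.det := Mz.isUnit_nonsing_inv_det hdetMz
  let A : Matrix (Fin g) (Fin g) ℚ := Mz.map (Int.cast : ℤ → ℚ)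
  have hAU : A * U.map (Int.cast : ℤ → ℚ) = 1 := by
    have h1 : Mz * U = 1 := Matrix.mul_nonsing_inv Mz hdetMz
    have h2 := congrArg (fun X : Matrix (Fin g) (Fin g) ℤ =>
      X.map ((Int.castRingHom ℚ) : ℤ → ℚ)) h1
    simp only [Matrix.map_mul, Matrix.map_one (Int.castRingHom ℚ) (map_zero _) (map_one _)] at h2
    exact h2
  have hA : ∀ k i, A k i = W i k := fun k i => by
    show (Mz.map (Int.cast : ℤ → ℚ)) k i = _
    rw [Matrix.map_apply, hMz]; rfl
  -- the positive definite block
  let T' : Matrix (Fin ν) (Fin ν) ℚ :=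
    Matrix.of fun i j => W (Fin.castLE hν i) ⬝ᵥ T.mulVec (W (Fin.castLE hν j))
  have hT'entry : ∀ i j, T' i j = W (Fin.castLE hν i) ⬝ᵥ T.mulVec (W (Fin.castLE hν j)) :=
    fun i j => rfl
  have hD : Aᵀ * T * A = (Matrix.of fun i' j' : Fin g =>
      if h : (i' : ℕ) < ν ∧ (j' : ℕ) < ν then T' ⟨i', h.1⟩ ⟨j', h.2⟩ else 0) := by
    ext i j
    rw [conj_entry]
    have hWi : (fun k => A k i) = W i := funext fun k => hA k i
    have hWj : (fun k => A k j) = W j := funext fun k => hA k j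
    rw [hWi, hWj, Matrix.of_apply]
    by_cases h : (i : ℕ) < ν ∧ (j : ℕ) < ν
    · rw [dif_pos h, hT'entry,
        show Fin.castLE hν ⟨(i : ℕ), h.1⟩ = i from Fin.ext rfl,
        show Fin.castLE hν ⟨(j : ℕ), h.2⟩ = j from Fin.ext rfl]
    · rw [dif_neg h]
      rcases not_and_or.mp h with h1 | h2
      · rw [dot_symm T hsym, hWker i h1, dotProduct_zero]
      · rw [hWker j h2, dotProduct_zero]
  -- positive definiteness
  have hpd : ∀ x : Fin ν → ℚ, x ≠ 0 → 0 < x ⬝ᵥ T'.mulVec x := by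
    intro x hx
    set y : Fin g → ℚ := ∑ i, x i • W (Fin.castLE hν i) with hy
    have hTy : T.mulVec y = ∑ j, x j • T.mulVec (W (Fin.castLE hν j)) := by
      rw [hy, show ∀ w, T.mulVec w = T.mulVecLin w from fun _ => rfl, map_sum]
      exact Finset.sum_congr rfl fun j _ => by rw [_root_.map_smul]; rfl
    have hxy : x ⬝ᵥ T'.mulVec x = y ⬝ᵥ T.mulVec y := by
      rw [dot_expand, hTy, dotProduct_finsum, Finset.sum_comm]
      apply Finset.sum_congr rfl; intro j _
      rw [dotProduct_smul, hy, finsum_dotProduct, Finset.smul_sum]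
      apply Finset.sum_congr rfl; intro i _
      rw [smul_dotProduct, hT'entry]
      simp only [smul_eq_mul]
      ring
    have h0 : 0 ≤ y ⬝ᵥ T.mulVec y := hpsd y
    rcases eq_or_lt_of_le h0 with heq | hlt
    · exfalso
      have hker : T.mulVec y = 0 := psd_ker T hsym hpsd y heq.symm
      have hy1 : y ∈ Submodule.span ℚ (W '' {j : Fin g | ¬ (j : ℕ) < ν}) :=
        hkerspan (by rw [LinearMap.mem_ker, Matrix.mulVecLin_apply]; exact hker)
      have hy2 : y ∈ Submodule.span ℚ (W '' {j : Fin g | (j : ℕ) < ν}) := by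
        rw [hy]
        apply Submodule.sum_mem
        intro i _
        exact Submodule.smul_mem _ _
          (Submodule.subset_span ⟨Fin.castLE hν i, by simp, rfl⟩)
      have hdisj := hWindep.disjoint_span_image
        (s := {j : Fin g | (j : ℕ) < ν}) (t := {j : Fin g | ¬ (j : ℕ) < ν})
        (Set.disjoint_left.mpr fun j hj hj' => hj' hj)
      have hy0 : y = 0 := Submodule.disjoint_def.mp hdisj y hy2 hy1
      have hind : LinearIndependent ℚ (fun i : Fin ν => W (Fin.castLE hν i)) :=
        hWindep.comp (Fin.castLE hν) (Fin.castLE_injective hν)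
      have hzero := Fintype.linearIndependent_iff.mp hind x (by rw [← hy, hy0])
      exact hx (funext hzero)
    · rw [hxy]; exact hlt
  -- half integrality of T'
  have hHI' : HalfIntegral T' := by
    refine ⟨?_, ?_, ?_⟩
    · ext i j
      rw [Matrix.transpose_apply, hT'entry, hT'entry, dot_symm T hsym]
    · intro i
      obtain ⟨z, hz⟩ := dot_int T hsym hdiag hoff (v (Fin.castLE hν i))
      exact ⟨z, by rw [hT'entry]; exact hz⟩
    · intro i j
      obtain ⟨z, hz⟩ := two_dot_int T hoff (v (Fin.castLE hν i)) (v (Fin.castLE hν j))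
      exact ⟨z, by rw [hT'entry]; exact hz⟩
  refine ⟨U, hUdet, T', hHI', hpd, ?_⟩
  intro i j
  have h1 : (U.map (Int.cast : ℤ → ℚ))ᵀ * (Aᵀ * T * A) * (U.map (Int.cast : ℤ → ℚ)) = T := by
    have h2 : (U.map (Int.cast : ℤ → ℚ))ᵀ * (Aᵀ * T * A) * (U.map (Int.cast : ℤ → ℚ))
        = (A * U.map (Int.cast : ℤ → ℚ))ᵀ * T * (A * U.map (Int.cast : ℤ → ℚ)) := by
      rw [Matrix.transpose_mul]
      simp only [Matrix.mul_assoc]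
    rw [h2, hAU, Matrix.transpose_one, Matrix.one_mul, Matrix.mul_one]
  rw [hD] at h1
  exact congrFun (congrFun h1.symm i) j
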